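/- arXiv:1712.06733 — 5 statements merged into one kernel-verified Lean document; each statement's English description precedes it below -/
import Mathlib

section
/- Let ε > 0 and define u : ℝ³ → ℝ by u(x,y,t) = (t² + (ε² + x² + y²)²)^(−1/2). Let X and Y be the left-invariant Heisenberg vector fields X = ∂/∂x + 2y ∂/∂t and Y = ∂/∂y − 2x ∂/∂t. Then (X² + Y²)u = −4ε² u³ everywhere on ℝ³. -/
/-!
Write `q = ε² + x² + y²`, `w = t² + q²`, so that `u = w^(-1/2)`. The fields act on `w` by
`X w = 4a`, `Y w = 4b`, where `a + ib = (q - it)(x + iy)`; hence `a² + b² = w (x² + y²)`, and a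
direct computation gives `X a + Y b = 2q + 4(x² + y²)`. Since `X` and `Y` are derivations, this
yields `(X² + Y²) w^r = 8r (q + 2r (x² + y²)) w^(r-1)` for every real `r`, and at `r = -1/2` the
`x² + y²` terms cancel, leaving `q - (x² + y²) = ε²`.
-/

open Real

/-- The left-invariant Heisenberg vector field `X = ∂/∂x + 2y ∂/∂t`,
acting on functions of `(x, y, t) ∈ ℝ³`. -/
noncomputable def heisenbergX (f : ℝ × ℝ × ℝ → ℝ) : ℝ × ℝ × ℝ → ℝ :=
  fun p => fderiv ℝ f p (1, 0, 0) + 2 * p.2.1 * fderiv ℝ f p (0, 0, 1)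

/-- The left-invariant Heisenberg vector field `Y = ∂/∂y − 2x ∂/∂t`. -/
noncomputable def heisenbergY (f : ℝ × ℝ × ℝ → ℝ) : ℝ × ℝ × ℝ → ℝ :=
  fun p => fderiv ℝ f p (0, 1, 0) - 2 * p.1 * fderiv ℝ f p (0, 0, 1)

section Calculus

variable {E : Type*} [NormedAddCommGroup E] [NormedSpace ℝ E] {g : E → ℝ} {x : E}

theorem fderiv_rpow_const_apply (hg : DifferentiableAt ℝ g x) (hg0 : g x ≠ 0) (s : ℝ)
    (v : E) :
    fderiv ℝ (fun y => g y ^ s) x v = s * g x ^ (s - 1) * fderiv ℝ g x v := by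
  rw [(hg.hasFDerivAt.rpow_const (Or.inl hg0)).fderiv]
  simp only [smul_apply, smul_eq_mul]

end Calculus

section Derivation

theorem heisenbergX_eq_fderiv (f : ℝ × ℝ × ℝ → ℝ) (p : ℝ × ℝ × ℝ) :
    heisenbergX f p = fderiv ℝ f p (1, 0, 2 * p.2.1) := by
  rw [heisenbergX, ← smul_eq_mul, ← map_smul, ← map_add]
  simp only [Prod.smul_mk, smul_eq_mul, mul_zero, mul_one, Prod.mk_add_mk, add_zero, zero_add]

theorem heisenbergY_eq_fderiv (f : ℝ × ℝ × ℝ → ℝ) (p : ℝ × ℝ × ℝ) :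
    heisenbergY f p = fderiv ℝ f p (0, 1, -(2 * p.1)) := by
  rw [heisenbergY, ← smul_eq_mul, ← map_smul, ← map_sub]
  simp only [Prod.smul_mk, smul_eq_mul, mul_zero, mul_one, Prod.mk_sub_mk, sub_self, sub_zero,
    zero_sub]

variable {f g : ℝ × ℝ × ℝ → ℝ} {p : ℝ × ℝ × ℝ}

theorem heisenbergX_mul (hf : DifferentiableAt ℝ f p) (hg : DifferentiableAt ℝ g p) :
    heisenbergX (fun ξ => f ξ * g ξ) p = heisenbergX f p * g p + f p * heisenbergX g p := by
  simp only [heisenbergX_eq_fderiv, fderiv_fun_mul hf hg, add_apply, smul_apply, smul_eq_mul]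
  ring

theorem heisenbergY_mul (hf : DifferentiableAt ℝ f p) (hg : DifferentiableAt ℝ g p) :
    heisenbergY (fun ξ => f ξ * g ξ) p = heisenbergY f p * g p + f p * heisenbergY g p := by
  simp only [heisenbergY_eq_fderiv, fderiv_fun_mul hf hg, add_apply, smul_apply, smul_eq_mul]
  ring

theorem heisenbergX_const_mul (hf : DifferentiableAt ℝ f p) (c : ℝ) :
    heisenbergX (fun ξ => c * f ξ) p = c * heisenbergX f p := by
  simp only [heisenbergX_eq_fderiv, fderiv_const_mul hf, smul_apply, smul_eq_mul]

theorem heisenbergY_const_mul (hf : DifferentiableAt ℝ f p) (c : ℝ) :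
    heisenbergY (fun ξ => c * f ξ) p = c * heisenbergY f p := by
  simp only [heisenbergY_eq_fderiv, fderiv_const_mul hf, smul_apply, smul_eq_mul]

theorem heisenbergX_rpow_const (hg : DifferentiableAt ℝ g p) (hg0 : g p ≠ 0) (s : ℝ) :
    heisenbergX (fun ξ => g ξ ^ s) p = s * g p ^ (s - 1) * heisenbergX g p := by
  simp only [heisenbergX_eq_fderiv, fderiv_rpow_const_apply hg hg0]

theorem heisenbergY_rpow_const (hg : DifferentiableAt ℝ g p) (hg0 : g p ≠ 0) (s : ℝ) :
    heisenbergY (fun ξ => g ξ ^ s) p = s * g p ^ (s - 1) * heisenbergY g p := by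
  simp only [heisenbergY_eq_fderiv, fderiv_rpow_const_apply hg hg0]

end Derivation

namespace Bubble

def q (ε : ℝ) : ℝ × ℝ × ℝ → ℝ := fun p => ε ^ 2 + p.1 ^ 2 + p.2.1 ^ 2

def w (ε : ℝ) : ℝ × ℝ × ℝ → ℝ := fun p => p.2.2 ^ 2 + q ε p ^ 2

def a (ε : ℝ) : ℝ × ℝ × ℝ → ℝ := fun p => q ε p * p.1 + p.2.1 * p.2.2

def b (ε : ℝ) : ℝ × ℝ × ℝ → ℝ := fun p => q ε p * p.2.1 - p.1 * p.2.2

variable (ε : ℝ) (p : ℝ × ℝ × ℝ)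

theorem w_pos (hε : ε ≠ 0) : 0 < w ε p := by
  have hq : 0 < q ε p := by unfold q; positivity
  unfold w; positivity

theorem differentiable_w : Differentiable ℝ (w ε) := by unfold w q; fun_prop

theorem differentiable_a : Differentiable ℝ (a ε) := by unfold a q; fun_prop

theorem differentiable_b : Differentiable ℝ (b ε) := by unfold b q; fun_prop

theorem heisenbergX_w : heisenbergX (w ε) p = 4 * a ε p := by
  unfold w a q
  simp (disch := fun_prop) only [heisenbergX_eq_fderiv, fderiv_fun_add, fderiv_fun_pow,
    fderiv.fst, fderiv.snd, fderiv_fun_id, fderiv_fun_const, ContinuousLinearMap.comp_id,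
    add_apply, smul_apply, ContinuousLinearMap.comp_apply, ContinuousLinearMap.coe_fst',
    ContinuousLinearMap.coe_snd', Pi.zero_apply, zero_apply, smul_eq_mul, nsmul_eq_mul,
    Nat.add_one_sub_one, pow_one, Nat.cast_ofNat]
  ring

theorem heisenbergY_w : heisenbergY (w ε) p = 4 * b ε p := by
  unfold w b q
  simp (disch := fun_prop) only [heisenbergY_eq_fderiv, fderiv_fun_add, fderiv_fun_pow,
    fderiv.fst, fderiv.snd, fderiv_fun_id, fderiv_fun_const, ContinuousLinearMap.comp_id,
    add_apply, smul_apply, ContinuousLinearMap.comp_apply, ContinuousLinearMap.coe_fst',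
    ContinuousLinearMap.coe_snd', Pi.zero_apply, zero_apply, smul_eq_mul, nsmul_eq_mul,
    Nat.add_one_sub_one, pow_one, Nat.cast_ofNat]
  ring

theorem heisenbergX_a_add_heisenbergY_b :
    heisenbergX (a ε) p + heisenbergY (b ε) p = 2 * q ε p + 4 * (p.1 ^ 2 + p.2.1 ^ 2) := by
  unfold a b q
  simp (disch := fun_prop) only [heisenbergX_eq_fderiv, heisenbergY_eq_fderiv, fderiv_fun_add,
    fderiv_fun_sub, fderiv_fun_mul, fderiv_fun_pow, fderiv.fst, fderiv.snd, fderiv_fun_id,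
    fderiv_fun_const, ContinuousLinearMap.comp_id, add_apply, sub_apply, smul_apply,
    ContinuousLinearMap.comp_apply, ContinuousLinearMap.coe_fst', ContinuousLinearMap.coe_snd',
    Pi.zero_apply, zero_apply, smul_eq_mul, nsmul_eq_mul, Nat.add_one_sub_one, pow_one,
    Nat.cast_ofNat]
  ring

theorem a_sq_add_b_sq : a ε p ^ 2 + b ε p ^ 2 = w ε p * (p.1 ^ 2 + p.2.1 ^ 2) := by
  unfold a b w
  ring

theorem heisenbergX_rpow_w (hε : ε ≠ 0) (r : ℝ) :
    heisenbergX (fun ξ => w ε ξ ^ r) = fun ξ => 4 * r * (a ε ξ * w ε ξ ^ (r - 1)) := by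
  funext ξ
  rw [heisenbergX_rpow_const (differentiable_w ε ξ) (w_pos ε ξ hε).ne', heisenbergX_w]
  ring

theorem heisenbergY_rpow_w (hε : ε ≠ 0) (r : ℝ) :
    heisenbergY (fun ξ => w ε ξ ^ r) = fun ξ => 4 * r * (b ε ξ * w ε ξ ^ (r - 1)) := by
  funext ξ
  rw [heisenbergY_rpow_const (differentiable_w ε ξ) (w_pos ε ξ hε).ne', heisenbergY_w]
  ring

theorem subLaplacian_rpow_w (hε : ε ≠ 0) (r : ℝ) :
    heisenbergX (heisenbergX fun ξ => w ε ξ ^ r) p +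
        heisenbergY (heisenbergY fun ξ => w ε ξ ^ r) p =
      8 * r * (q ε p + 2 * r * (p.1 ^ 2 + p.2.1 ^ 2)) * w ε p ^ (r - 1) := by
  have hw := differentiable_w ε p
  have hw0 := (w_pos ε p hε).ne'
  have hrpow : DifferentiableAt ℝ (fun ξ => w ε ξ ^ (r - 1)) p := hw.rpow_const (Or.inl hw0)
  have ha := differentiable_a ε p
  have hb := differentiable_b ε p
  rw [heisenbergX_rpow_w ε hε, heisenbergY_rpow_w ε hε,
    heisenbergX_const_mul (f := fun ξ => a ε ξ * w ε ξ ^ (r - 1)) (ha.mul hrpow),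
    heisenbergY_const_mul (f := fun ξ => b ε ξ * w ε ξ ^ (r - 1)) (hb.mul hrpow),
    heisenbergX_mul ha hrpow, heisenbergY_mul hb hrpow,
    heisenbergX_rpow_const hw hw0, heisenbergY_rpow_const hw hw0, heisenbergX_w, heisenbergY_w]
  have hpow : w ε p * w ε p ^ (r - 1 - 1) = w ε p ^ (r - 1) := by
    rw [mul_comm, ← rpow_add_one hw0, sub_add_cancel]
  linear_combination 4 * r * w ε p ^ (r - 1) * heisenbergX_a_add_heisenbergY_b ε p
    + 16 * r * (r - 1) * w ε p ^ (r - 1 - 1) * a_sq_add_b_sq ε p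
    + 16 * r * (r - 1) * (p.1 ^ 2 + p.2.1 ^ 2) * hpow

end Bubble

/-- The standard bubble `u(x,y,t) = (t² + (ε² + x² + y²)²)^(−1/2)` satisfies
`(X² + Y²) u = −4 ε² u³` on all of `ℝ³`. -/
theorem bubble_solves_CR_Yamabe (ε : ℝ) (hε : 0 < ε)
    (u : ℝ × ℝ × ℝ → ℝ)
    (hu : u = fun p => (p.2.2 ^ 2 + (ε ^ 2 + p.1 ^ 2 + p.2.1 ^ 2) ^ 2) ^ (-(1 : ℝ) / 2)) :
    ∀ p : ℝ × ℝ × ℝ,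
      heisenbergX (heisenbergX u) p + heisenbergY (heisenbergY u) p
        = -(4 * ε ^ 2) * u p ^ 3 := by
  subst hu
  intro p
  have hw := Bubble.w_pos ε p hε.ne'
  refine (Bubble.subLaplacian_rpow_w ε p hε.ne' (-1 / 2)).trans ?_
  change _ = -(4 * ε ^ 2) * (Bubble.w ε p ^ (-(1 : ℝ) / 2)) ^ 3
  rw [← rpow_natCast (Bubble.w ε p ^ _) 3, ← rpow_mul hw.le]
  norm_num [Bubble.q]
end

section
/- Let q be a real number with 2 < q ≤ 4. There exists a constant C = C(q) > 0 such that for all real numbers v ≥ 0 and w with v + w ≥ 0, one has |(v+w)^q − v^q − q v^{q−1} w − (q(q−1)/2) v^{q−2} w²| ≤ C ( v^{max(0, q−3)} |w|^{min(3, q)} + |w|^q ). -/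
/-!
Applying the mean value theorem twice writes the second-order Taylor remainder of `x ^ q`
at `v` as `θ q (q - 1) w² (ξ ^ (q - 2) - v ^ (q - 2))` with `θ ∈ [0, 1]` and `ξ` between
`v` and `v + w`. For `r = q - 2 ≤ 1` the map `t ↦ t ^ r` is `r`-Hölder, so the difference is
at most `|w| ^ (q - 2)`; for `1 < r ≤ 2` the mean value theorem and the subadditivity of
`t ↦ t ^ (r - 1)` bound it by `r |w| (v ^ (q - 3) + |w| ^ (q - 3))`. Multiplying by `w²`
gives the two terms of the estimate.
-/

open Set

theorem exists_abs_taylor_remainder_two_le {f f' f'' : ℝ → ℝ}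
    (hf : ∀ x, HasDerivAt f (f' x) x) (hf' : ∀ x, HasDerivAt f' (f'' x) x) (x h : ℝ) :
    ∃ σ ∈ Icc (0 : ℝ) 1,
      |f (x + h) - f x - f' x * h - f'' x / 2 * h ^ 2| ≤ h ^ 2 * |f'' (x + σ * h) - f'' x| := by
  have hline : ∀ {g g' : ℝ → ℝ}, (∀ y, HasDerivAt g (g' y) y) →
      ∀ t, HasDerivAt (fun t => g (x + t * h)) (g' (x + t * h) * h) t := fun hg t => by
    have hlin : HasDerivAt (fun t => x + t * h) h t := by
      simpa using ((hasDerivAt_id t).mul_const h).const_add x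
    exact (hg (x + t * h)).comp t hlin
  have hF : ∀ t, HasDerivAt (fun t => f (x + t * h) - f' x * h * t - f'' x / 2 * h ^ 2 * t ^ 2)
      ((f' (x + t * h) - f' x - f'' x * h * t) * h) t := fun t => by
    refine (((hline hf t).sub ((hasDerivAt_id t).const_mul (f' x * h))).sub
      ((hasDerivAt_pow 2 t).const_mul (f'' x / 2 * h ^ 2))).congr_deriv ?_
    simp only [Nat.cast_ofNat]
    ring
  have hG : ∀ t, HasDerivAt (fun t => f' (x + t * h) - f'' x * h * t)
      ((f'' (x + t * h) - f'' x) * h) t := fun t => by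
    refine ((hline hf' t).sub ((hasDerivAt_id t).const_mul (f'' x * h))).congr_deriv ?_
    ring
  obtain ⟨θ, hθ, hFθ⟩ := exists_hasDerivAt_eq_slope _ _ one_pos
    (fun t _ => (hF t).continuousAt.continuousWithinAt) (fun t _ => hF t)
  obtain ⟨σ, hσ, hGσ⟩ := exists_hasDerivAt_eq_slope _ _ hθ.1
    (fun t _ => (hG t).continuousAt.continuousWithinAt) (fun t _ => hG t)
  have hremainder : f (x + h) - f x - f' x * h - f'' x / 2 * h ^ 2
      = θ * h ^ 2 * (f'' (x + σ * h) - f'' x) := by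
    simp only [zero_mul, add_zero, mul_zero, sub_zero, one_mul, one_pow, div_one,
      mul_one] at hFθ hGσ
    rw [eq_div_iff hθ.1.ne'] at hGσ
    linear_combination -hFθ - h * hGσ
  refine ⟨σ, ⟨hσ.1.le, hσ.2.le.trans hθ.2.le⟩, ?_⟩
  rw [hremainder, abs_mul, abs_mul, abs_of_nonneg hθ.1.le, abs_of_nonneg (sq_nonneg h)]
  exact mul_le_of_le_one_left (by positivity) hθ.2.le |>.trans_eq' (by ring)

theorem abs_rpow_sub_rpow_le_abs_sub_rpow {a b r : ℝ} (ha : 0 ≤ a) (hb : 0 ≤ b)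
    (hr₀ : 0 ≤ r) (hr₁ : r ≤ 1) : |a ^ r - b ^ r| ≤ |a - b| ^ r := by
  wlog hba : b ≤ a generalizing a b
  · rw [abs_sub_comm, abs_sub_comm a]
    exact this hb ha (le_of_not_ge hba)
  have hsub : a ^ r ≤ (a - b) ^ r + b ^ r := by
    simpa using Real.rpow_add_le_add_rpow (sub_nonneg.2 hba) hb hr₀ hr₁
  rw [abs_of_nonneg (sub_nonneg.2 (Real.rpow_le_rpow hb hba hr₀)),
    abs_of_nonneg (sub_nonneg.2 hba)]
  linarith

theorem abs_rpow_sub_rpow_le_mul_max {a b r : ℝ} (ha : 0 ≤ a) (hb : 0 ≤ b) (hr : 1 ≤ r) :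
    |a ^ r - b ^ r| ≤ r * max a b ^ (r - 1) * |a - b| := by
  have hderiv : ∀ x ∈ Icc 0 (max a b), HasDerivWithinAt (fun x : ℝ => x ^ r)
      (r * x ^ (r - 1)) (Icc 0 (max a b)) x := fun x _ =>
    (Real.hasDerivAt_rpow_const (Or.inr hr)).hasDerivWithinAt
  have hbound : ∀ x ∈ Icc 0 (max a b), ‖r * x ^ (r - 1)‖ ≤ r * max a b ^ (r - 1) := by
    intro x hx
    rw [Real.norm_eq_abs, abs_of_nonneg (mul_nonneg (by linarith) (Real.rpow_nonneg hx.1 _))]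
    gcongr
    · exact hx.1
    · exact hx.2
  simpa [Real.norm_eq_abs] using
    (convex_Icc 0 (max a b)).norm_image_sub_le_of_norm_hasDerivWithin_le hderiv hbound
      ⟨hb, le_max_right a b⟩ ⟨ha, le_max_left a b⟩

theorem abs_rpow_sub_rpow_le {a b d r : ℝ} (ha : 0 ≤ a) (hb : 0 ≤ b) (hr₀ : 0 ≤ r)
    (hr₂ : r ≤ 2) (hd : |a - b| ≤ d) :
    |a ^ r - b ^ r| ≤ 2 * (b ^ max 0 (r - 1) * d ^ min 1 r + d ^ r) := by
  have hd₀ : 0 ≤ d := (abs_nonneg _).trans hd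
  rcases le_or_gt r 1 with hr₁ | hr₁
  · rw [max_eq_left (by linarith), min_eq_right hr₁, Real.rpow_zero, one_mul]
    have := (abs_rpow_sub_rpow_le_abs_sub_rpow ha hb hr₀ hr₁).trans
      (Real.rpow_le_rpow (abs_nonneg _) hd hr₀)
    linarith [Real.rpow_nonneg hd₀ r]
  · rw [max_eq_right (by linarith), min_eq_left hr₁.le, Real.rpow_one]
    have hmax : max a b ≤ b + d := max_le (by linarith [le_abs_self (a - b)]) (by linarith)
    have hd_rpow : d ^ (r - 1) * d = d ^ r := by
      rw [← Real.rpow_add_one' hd₀ (by linarith), sub_add_cancel]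
    calc |a ^ r - b ^ r| ≤ r * max a b ^ (r - 1) * |a - b| :=
          abs_rpow_sub_rpow_le_mul_max ha hb hr₁.le
      _ ≤ 2 * (b + d) ^ (r - 1) * d := by
          gcongr
      _ ≤ 2 * (b ^ (r - 1) + d ^ (r - 1)) * d := by
          gcongr
          exact Real.rpow_add_le_add_rpow hb hd₀ (by linarith) (by linarith)
      _ = 2 * (b ^ (r - 1) * d + d ^ r) := by rw [← hd_rpow]; ring

theorem exists_abs_rpow_taylor_remainder_two_le {q : ℝ} (hq : 2 ≤ q) (v w : ℝ) :
    ∃ σ ∈ Icc (0 : ℝ) 1,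
      |(v + w) ^ q - v ^ q - q * v ^ (q - 1) * w - (q * (q - 1) / 2) * v ^ (q - 2) * w ^ 2|
        ≤ q * (q - 1) * w ^ 2 * |(v + σ * w) ^ (q - 2) - v ^ (q - 2)| := by
  have hf : ∀ x : ℝ, HasDerivAt (fun x => x ^ q) (q * x ^ (q - 1)) x := fun x =>
    Real.hasDerivAt_rpow_const (Or.inr (by linarith))
  have hf' : ∀ x : ℝ, HasDerivAt (fun x => q * x ^ (q - 1)) (q * (q - 1) * x ^ (q - 2)) x :=
    fun x => by
      have := (Real.hasDerivAt_rpow_const (x := x) (p := q - 1) (Or.inr (by linarith))).const_mul q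
      rwa [sub_sub, one_add_one_eq_two, ← mul_assoc] at this
  obtain ⟨σ, hσ, hle⟩ := exists_abs_taylor_remainder_two_le hf hf' v w
  refine ⟨σ, hσ, ?_⟩
  rw [← mul_sub, abs_mul (q * (q - 1)),
    abs_of_nonneg (show 0 ≤ q * (q - 1) by nlinarith)] at hle
  calc _ = |(v + w) ^ q - v ^ q - q * v ^ (q - 1) * w - q * (q - 1) * v ^ (q - 2) / 2 * w ^ 2| := by
        ring_nf
    _ ≤ _ := hle
    _ = _ := by ring

theorem sq_mul_abs_rpow (w e : ℝ) (he : 0 ≤ e) : w ^ 2 * |w| ^ e = |w| ^ (e + 2) := by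
  rw [← sq_abs, ← Real.rpow_natCast, Real.rpow_add' (abs_nonneg w) (by positivity)]
  norm_num [mul_comm]

/-- Second-order Taylor remainder estimate for the power function: for `2 < q ≤ 4`
there is `C > 0` with
`|(v+w)^q − v^q − q v^{q−1} w − (q(q−1)/2) v^{q−2} w²|
  ≤ C (v^{max(0,q−3)} |w|^{min(3,q)} + |w|^q)`
for all `v ≥ 0` and `w` with `v + w ≥ 0`. -/
theorem second_order_taylor_power (q : ℝ) (hq1 : 2 < q) (hq2 : q ≤ 4) :
    ∃ C : ℝ, 0 < C ∧ ∀ v w : ℝ, 0 ≤ v → 0 ≤ v + w →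
      |(v + w) ^ q - v ^ q - q * v ^ (q - 1) * w - (q * (q - 1) / 2) * v ^ (q - 2) * w ^ 2|
        ≤ C * (v ^ max 0 (q - 3) * |w| ^ min 3 q + |w| ^ q) := by
  have hcoef : 0 < q * (q - 1) := by nlinarith
  refine ⟨2 * (q * (q - 1)), by positivity, fun v w hv hvw => ?_⟩
  obtain ⟨σ, hσ, htaylor⟩ := exists_abs_rpow_taylor_remainder_two_le hq1.le v w
  have hξ : 0 ≤ v + σ * w := by nlinarith [hσ.1, hσ.2]
  have hdist : |v + σ * w - v| ≤ |w| := by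
    rw [add_sub_cancel_left, abs_mul, abs_of_nonneg hσ.1]
    exact mul_le_of_le_one_left (abs_nonneg w) hσ.2
  have hdiff := abs_rpow_sub_rpow_le (r := q - 2) hξ hv (by linarith) (by linarith) hdist
  have hmin : min 1 (q - 2) + 2 = min 3 q := by rw [← min_add_add_right]; norm_num
  calc _ ≤ q * (q - 1) * w ^ 2 * (2 * (v ^ max 0 (q - 2 - 1) * |w| ^ min 1 (q - 2)
          + |w| ^ (q - 2))) := htaylor.trans (by gcongr)
    _ = 2 * (q * (q - 1)) * (v ^ max 0 (q - 3) * (w ^ 2 * |w| ^ min 1 (q - 2))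
          + w ^ 2 * |w| ^ (q - 2)) := by ring_nf
    _ = _ := by
      rw [sq_mul_abs_rpow w _ (le_min zero_le_one (by linarith)), hmin,
        sq_mul_abs_rpow w _ (by linarith), sub_add_cancel]
end

section
/- Let p be a real number with 0 < p ≤ 2. There exists a constant C = C(p) > 0 such that for all real numbers u ≥ 0 and v ≥ 0, one has |u^{1+p} − v^{1+p} − |u − v|^p (u − v)| ≤ C ( v^p |u − v| + |u − v|^p v ). -/
/-!
With `q = 1 + p` and `w = |u - v|`, the quantity inside the absolute value is, up to sign,
`(x + w)^q - x^q - w^q` with `x = min u v`. This is nonnegative by superadditivity of `t ↦ t^q`,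
and by convexity it is at most `q (x + w)^p min x w ≤ q 2^p (x^p w + w^p x)`.
-/

open Real

lemma rpow_one_add_add_sub_rpow_le {p x h : ℝ} (hp : 0 ≤ p) (hx : 0 ≤ x) (hh : 0 ≤ h) :
    (x + h) ^ (1 + p) - x ^ (1 + p) ≤ (1 + p) * (x + h) ^ p * h := by
  rcases hh.eq_or_lt with rfl | hh
  · simp
  have hq : 1 ≤ 1 + p := by linarith
  have hslope := (convexOn_rpow hq).slope_le_of_hasDerivAt (x := x) (y := x + h)
    hx (by simp; positivity) (by linarith) (hasDerivAt_rpow_const (Or.inr hq))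
  rwa [slope_def_field, add_sub_cancel_left, add_sub_cancel_left, div_le_iff₀ hh] at hslope

lemma abs_rpow_one_add_add_sub_sub_le {p x y : ℝ} (hp : 0 ≤ p) (hx : 0 ≤ x) (hy : 0 ≤ y) :
    |(x + y) ^ (1 + p) - x ^ (1 + p) - y ^ (1 + p)|
      ≤ (1 + p) * 2 ^ p * (x ^ p * y + y ^ p * x) := by
  have hq : 1 ≤ 1 + p := by linarith
  rw [abs_of_nonneg (by linarith [add_rpow_le_rpow_add hx hy hq])]
  wlog hxy : x ≤ y generalizing x y
  · have := this hy hx (by linarith)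
    rw [add_comm y x] at this
    linarith
  calc (x + y) ^ (1 + p) - x ^ (1 + p) - y ^ (1 + p)
      ≤ (y + x) ^ (1 + p) - y ^ (1 + p) := by
        rw [add_comm x y]; linarith [rpow_nonneg hx (1 + p)]
    _ ≤ (1 + p) * (y + x) ^ p * x := rpow_one_add_add_sub_rpow_le hp hy hx
    _ ≤ (1 + p) * (2 * y) ^ p * x := by gcongr; linarith
    _ = (1 + p) * 2 ^ p * (y ^ p * x) := by rw [mul_rpow zero_le_two hy]; ring
    _ ≤ (1 + p) * 2 ^ p * (x ^ p * y + y ^ p * x) := by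
        gcongr; exact le_add_of_nonneg_left (by positivity)

theorem signed_power_decomposition_general (p : ℝ) (hp1 : 0 < p) :
    ∃ C : ℝ, 0 < C ∧ ∀ u v : ℝ, 0 ≤ u → 0 ≤ v →
      |u ^ (1 + p) - v ^ (1 + p) - |u - v| ^ p * (u - v)|
        ≤ C * (v ^ p * |u - v| + |u - v| ^ p * v) := by
  refine ⟨(1 + p) * 2 ^ p, by positivity, fun u v hu hv => ?_⟩
  have hw_pow (w : ℝ) (hw : 0 ≤ w) : w ^ p * w = w ^ (1 + p) := by
    rw [rpow_one_add' hw (by linarith), mul_comm]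
  rcases le_total v u with hvu | huv
  · obtain ⟨w, hw, rfl⟩ : ∃ w, 0 ≤ w ∧ u = v + w := ⟨u - v, by linarith, by ring⟩
    rw [add_sub_cancel_left, abs_of_nonneg hw, hw_pow w hw]
    exact abs_rpow_one_add_add_sub_sub_le hp1.le hv hw
  · obtain ⟨w, hw, rfl⟩ : ∃ w, 0 ≤ w ∧ v = u + w := ⟨v - u, by linarith, by ring⟩
    rw [sub_add_cancel_left, abs_neg, abs_of_nonneg hw, mul_neg, hw_pow w hw]
    calc |u ^ (1 + p) - (u + w) ^ (1 + p) - -w ^ (1 + p)|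
        = |(u + w) ^ (1 + p) - u ^ (1 + p) - w ^ (1 + p)| := by rw [← abs_neg]; congr 1; ring
      _ ≤ (1 + p) * 2 ^ p * (u ^ p * w + w ^ p * u) :=
          abs_rpow_one_add_add_sub_sub_le hp1.le hu hw
      _ ≤ (1 + p) * 2 ^ p * ((u + w) ^ p * w + w ^ p * (u + w)) := by gcongr

/-- Brezis–Lieb type pointwise estimate: for `0 < p ≤ 2` there is `C > 0` with
`|u^{1+p} − v^{1+p} − |u−v|^p (u−v)| ≤ C(v^p |u−v| + |u−v|^p v)` for all `u, v ≥ 0`. -/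
theorem signed_power_decomposition (p : ℝ) (hp1 : 0 < p) (hp2 : p ≤ 2) :
    ∃ C : ℝ, 0 < C ∧ ∀ u v : ℝ, 0 ≤ u → 0 ≤ v →
      |u ^ (1 + p) - v ^ (1 + p) - |u - v| ^ p * (u - v)|
        ≤ C * (v ^ p * |u - v| + |u - v| ^ p * v) :=
  signed_power_decomposition_general p hp1
end

section
/- Let 0 < γ < 1 and C > 0, let a ∈ ℝ, and let f : [a, ∞) → ℝ be differentiable with f(t) > 0 for all t ≥ a and f′(t) ≤ −C f(t)^{2/(1+γ)} for all t ≥ a. Then for all t > a, f(t) ≤ ( C (1−γ)/(1+γ) · (t − a) )^{−(1+γ)/(1−γ)}. -/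
/-!
With `p > 1`, the inequality `f' ≤ -C f ^ p` says exactly that `g = f ^ (1 - p)` satisfies
`g' = (1 - p) f' f ^ (-p) ≥ C (p - 1)`. Hence `g` grows at least linearly, `g t ≥ C (p - 1) (t - a)`,
and raising this to the negative power `-(p - 1)⁻¹` gives the decay of `f`.
-/

open Set

namespace Real

lemma mul_sub_one_le_of_le_neg_mul_rpow {p C y y' : ℝ} (hp : 1 ≤ p) (hy : 0 < y)
    (h : y' ≤ -C * y ^ p) : C * (p - 1) ≤ y' * (1 - p) * y ^ (1 - p - 1) := by
  have hcancel : y ^ p * y ^ (1 - p - 1) = 1 := by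
    rw [← rpow_add hy, show p + (1 - p - 1) = 0 by ring, rpow_zero]
  have hmul : -C * y ^ p * (1 - p) ≤ y' * (1 - p) :=
    mul_le_mul_of_nonpos_right h (by linarith)
  calc C * (p - 1) = -C * y ^ p * (1 - p) * y ^ (1 - p - 1) := by
        rw [mul_right_comm, mul_assoc (-C), hcancel]; ring
    _ ≤ y' * (1 - p) * y ^ (1 - p - 1) :=
        mul_le_mul_of_nonneg_right hmul (rpow_pos_of_pos hy _).le

variable {p C a : ℝ} {f f' : ℝ → ℝ}

lemma mul_sub_le_rpow_one_sub_sub (hp : 1 ≤ p) (hpos : ∀ t, a ≤ t → 0 < f t)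
    (hderiv : ∀ t, a ≤ t → HasDerivAt f (f' t) t) (hineq : ∀ t, a ≤ t → f' t ≤ -C * f t ^ p)
    {t : ℝ} (ht : a ≤ t) : C * (p - 1) * (t - a) ≤ f t ^ (1 - p) - f a ^ (1 - p) := by
  have hg : ∀ x, a ≤ x →
      HasDerivAt (fun s ↦ f s ^ (1 - p)) (f' x * (1 - p) * f x ^ (1 - p - 1)) x :=
    fun x hx ↦ (hderiv x hx).rpow_const (Or.inl (hpos x hx).ne')
  refine (convex_Ici a).mul_sub_le_image_sub_of_le_deriv
    (fun x hx ↦ (hg x hx).continuousAt.continuousWithinAt) ?_ ?_ a self_mem_Ici t ht ht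
  · rw [interior_Ici]
    exact fun x hx ↦ (hg x (le_of_lt hx)).differentiableAt.differentiableWithinAt
  · rw [interior_Ici]
    intro x hx
    rw [(hg x (le_of_lt hx)).deriv]
    exact mul_sub_one_le_of_le_neg_mul_rpow hp (hpos x (le_of_lt hx)) (hineq x (le_of_lt hx))

lemma le_rpow_of_hasDerivAt_le_neg_mul_rpow (hp : 1 < p) (hC : 0 < C)
    (hpos : ∀ t, a ≤ t → 0 < f t) (hderiv : ∀ t, a ≤ t → HasDerivAt f (f' t) t)
    (hineq : ∀ t, a ≤ t → f' t ≤ -C * f t ^ p) {t : ℝ} (ht : a < t) :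
    f t ≤ (C * (p - 1) * (t - a)) ^ (-(p - 1)⁻¹) := by
  have hp1 : 0 < p - 1 := sub_pos.mpr hp
  have hgrowth : C * (p - 1) * (t - a) ≤ f t ^ (1 - p) := by
    have := mul_sub_le_rpow_one_sub_sub hp.le hpos hderiv hineq ht.le
    linarith [rpow_pos_of_pos (hpos a le_rfl) (1 - p)]
  have hinv : (f t ^ (1 - p)) ^ (-(p - 1)⁻¹) = f t := by
    rw [← rpow_mul (hpos t ht.le).le, show (1 - p) * -(p - 1)⁻¹ = 1 by field_simp; ring,
      rpow_one]
  calc f t = (f t ^ (1 - p)) ^ (-(p - 1)⁻¹) := hinv.symm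
    _ ≤ (C * (p - 1) * (t - a)) ^ (-(p - 1)⁻¹) :=
        rpow_le_rpow_of_nonpos (by positivity [sub_pos.mpr ht]) hgrowth
          (neg_nonpos.mpr (inv_pos.mpr hp1).le)

end Real

/-- ODE comparison lemma for the Lojasiewicz differential inequality: if `0 < γ < 1`,
`C > 0`, `f > 0` on `[a, ∞)`, and `f′(t) ≤ −C f(t)^{2/(1+γ)}` there, then
`f(t) ≤ (C (1−γ)/(1+γ) (t−a))^{−(1+γ)/(1−γ)}` for `t > a`. -/
theorem lojasiewicz_decay (γ C a : ℝ) (hγ0 : 0 < γ) (hγ1 : γ < 1) (hC : 0 < C)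
    (f f' : ℝ → ℝ)
    (hpos : ∀ t, a ≤ t → 0 < f t)
    (hderiv : ∀ t, a ≤ t → HasDerivAt f (f' t) t)
    (hineq : ∀ t, a ≤ t → f' t ≤ -C * f t ^ (2 / (1 + γ))) :
    ∀ t, a < t →
      f t ≤ (C * (1 - γ) / (1 + γ) * (t - a)) ^ (-((1 + γ) / (1 - γ))) := by
  intro t ht
  have hsub : 2 / (1 + γ) - 1 = (1 - γ) / (1 + γ) := by field_simp; ring
  have hp : 1 < 2 / (1 + γ) := by rw [lt_div_iff₀ (by linarith)]; linarith
  have h := Real.le_rpow_of_hasDerivAt_le_neg_mul_rpow hp hC hpos hderiv hineq ht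
  rwa [hsub, inv_div, ← mul_div_assoc] at h
end

section
/- Let n ≥ 1 be an integer and let ε₁ > 0, ε₂ > 0, d ≥ 0 be real numbers. Then ε₁ⁿ ε₂ⁿ (ε₂⁴ + d⁴)^{−(n+1)/2} ∫_0^{(ε₂+d)/2} r^{2n+1} (ε₁⁴ + r⁴)^{−n/2} dr + ε₁ⁿ ε₂^{n+2} (ε₂⁴ + d⁴)^{−n/2} ∫_0^∞ r^{2n+1} (ε₂⁴ + r⁴)^{−(n+2)/2} dr ≤ 2 ( ε₁² ε₂² / (ε₂⁴ + d⁴) )^{n/2}. -/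
/-!
Both integrals are bounded by elementary ones after comparing `ε⁴ + r⁴` with `r⁴` in the powers,
which uses `r ^ (2 * n) ≤ (ε⁴ + r⁴) ^ (n / 2)`. The first integrand is then at most `r`, so the
first integral is at most `((ε₂ + d) / 2)² / 2 ≤ √(ε₂⁴ + d⁴)`. The second is at most
`r / (ε₂⁴ + r⁴) ≤ 2 r / (ε₂² + r²)²`, the derivative of `-(ε₂² + r²)⁻¹`, so its integral over
`(0, ∞)` is at most `ε₂⁻²`. Each of the two terms is then at most `(ε₁² ε₂² / (ε₂⁴ + d⁴)) ^ (n / 2)`.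
-/

open MeasureTheory Set Filter Topology

section

variable {c : ℝ}

lemma pow_two_mul_le_rpow_add_pow_four (n : ℕ) (hc : 0 ≤ c) (r : ℝ) :
    r ^ (2 * n) ≤ (c + r ^ 4) ^ ((n : ℝ) / 2) := by
  calc r ^ (2 * n) = (r ^ 4) ^ ((n : ℝ) / 2) := by
        have h : (2 : ℝ) * ((n : ℝ) / 2) = n := by ring
        rw [pow_mul, show r ^ 4 = ((r ^ 2) ^ (2 : ℝ)) by norm_num [← pow_mul],
          ← Real.rpow_mul (sq_nonneg r), h, Real.rpow_natCast]
    _ ≤ (c + r ^ 4) ^ ((n : ℝ) / 2) :=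
        Real.rpow_le_rpow (by positivity) (le_add_of_nonneg_left hc) (by positivity)

lemma pow_mul_rpow_neg_le (n : ℕ) {r : ℝ} (hc : 0 ≤ c) (hr : 0 ≤ r) :
    r ^ (2 * n + 1) * (c + r ^ 4) ^ (-((n : ℝ) / 2)) ≤ r := by
  have hX : 0 ≤ c + r ^ 4 := by positivity
  rw [Real.rpow_neg hX, pow_succ', mul_assoc, ← div_eq_mul_inv]
  exact mul_le_of_le_one_right hr
    (div_le_one_of_le₀ (pow_two_mul_le_rpow_add_pow_four n hc r) (by positivity))

lemma pow_mul_rpow_neg_add_two_le (n : ℕ) {r : ℝ} (hc : 0 < c) (hr : 0 ≤ r) :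
    r ^ (2 * n + 1) * (c + r ^ 4) ^ (-(((n : ℝ) + 2) / 2)) ≤ r / (c + r ^ 4) := by
  have hX : 0 < c + r ^ 4 := by positivity
  rw [show -(((n : ℝ) + 2) / 2) = -((n : ℝ) / 2) + -1 by ring, Real.rpow_add hX,
    Real.rpow_neg_one, ← mul_assoc, div_eq_mul_inv]
  exact mul_le_mul_of_nonneg_right (pow_mul_rpow_neg_le n hc.le hr) (by positivity)

lemma hasDerivAt_neg_inv_add_sq (hc : 0 < c) (x : ℝ) :
    HasDerivAt (fun r : ℝ => -(c + r ^ 2)⁻¹) (2 * x / (c + x ^ 2) ^ 2) x := by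
  refine (((hasDerivAt_pow 2 x).const_add c).fun_inv (by positivity)).fun_neg.congr_deriv ?_
  norm_num
  ring

lemma tendsto_neg_inv_add_sq (c : ℝ) : Tendsto (fun r : ℝ => -(c + r ^ 2)⁻¹) atTop (𝓝 0) := by
  simpa using (tendsto_inv_atTop_zero.comp
    (tendsto_atTop_add_const_left _ c (tendsto_pow_atTop two_ne_zero))).neg

lemma integrableOn_Ioi_two_mul_div_add_sq_sq (hc : 0 < c) :
    IntegrableOn (fun r : ℝ => 2 * r / (c + r ^ 2) ^ 2) (Ioi 0) :=
  integrableOn_Ioi_deriv_of_nonneg' (fun x _ => hasDerivAt_neg_inv_add_sq hc x)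
    (fun x hx => by have : 0 < x := hx; positivity) (tendsto_neg_inv_add_sq c)

lemma integral_Ioi_two_mul_div_add_sq_sq (hc : 0 < c) :
    ∫ r in Ioi (0 : ℝ), 2 * r / (c + r ^ 2) ^ 2 = c⁻¹ := by
  rw [integral_Ioi_of_hasDerivAt_of_nonneg' (fun x _ => hasDerivAt_neg_inv_add_sq hc x)
    (fun x hx => by have : 0 < x := hx; positivity) (tendsto_neg_inv_add_sq c)]
  simp

lemma setIntegral_Ioc_pow_mul_rpow_neg_le (n : ℕ) (hc : 0 ≤ c) {L : ℝ} (hL : 0 ≤ L) :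
    ∫ r in Ioc (0 : ℝ) L, r ^ (2 * n + 1) * (c + r ^ 4) ^ (-((n : ℝ) / 2)) ≤ L ^ 2 / 2 := by
  calc ∫ r in Ioc (0 : ℝ) L, r ^ (2 * n + 1) * (c + r ^ 4) ^ (-((n : ℝ) / 2))
      ≤ ∫ r in Ioc (0 : ℝ) L, r := by
        refine integral_mono_of_nonneg ?_ continuous_id.integrableOn_Ioc ?_ <;>
          filter_upwards [ae_restrict_mem measurableSet_Ioc] with r hr
        · have : 0 < r := hr.1
          positivity
        · exact pow_mul_rpow_neg_le n hc hr.1.le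
    _ = L ^ 2 / 2 := by
        rw [← intervalIntegral.integral_of_le hL, integral_id]
        ring

lemma setIntegral_Ioi_pow_mul_rpow_neg_add_two_le (n : ℕ) {ε : ℝ} (hε : ε ≠ 0) :
    ∫ r in Ioi (0 : ℝ), r ^ (2 * n + 1) * (ε ^ 4 + r ^ 4) ^ (-(((n : ℝ) + 2) / 2))
      ≤ (ε ^ 2)⁻¹ := by
  rw [← integral_Ioi_two_mul_div_add_sq_sq (by positivity : 0 < ε ^ 2)]
  refine integral_mono_of_nonneg ?_ (integrableOn_Ioi_two_mul_div_add_sq_sq (by positivity)) ?_ <;>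
    filter_upwards [ae_restrict_mem measurableSet_Ioi] with r hr
  · have : 0 < r := hr
    positivity
  · calc r ^ (2 * n + 1) * (ε ^ 4 + r ^ 4) ^ (-(((n : ℝ) + 2) / 2))
        ≤ r / (ε ^ 4 + r ^ 4) := pow_mul_rpow_neg_add_two_le n (by positivity) (le_of_lt hr)
      _ ≤ 2 * r / (ε ^ 2 + r ^ 2) ^ 2 := by
        rw [div_le_div_iff₀ (by positivity) (by positivity)]
        nlinarith [mul_nonneg (le_of_lt hr) (sq_nonneg (ε ^ 2 - r ^ 2))]

lemma sq_rpow_natCast_div_two {x : ℝ} (hx : 0 ≤ x) (n : ℕ) : (x ^ 2) ^ ((n : ℝ) / 2) = x ^ n := by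
  rw [← Real.rpow_two, ← Real.rpow_mul hx, mul_div_cancel₀ _ two_ne_zero, Real.rpow_natCast]

lemma add_div_two_sq_div_two_le_sqrt (a b : ℝ) : ((a + b) / 2) ^ 2 / 2 ≤ √(a ^ 4 + b ^ 4) := by
  apply Real.le_sqrt_of_sq_le
  nlinarith [sq_nonneg (a - b), sq_nonneg (a ^ 2 - b ^ 2), sq_nonneg (a + b),
    sq_nonneg ((a + b) ^ 2)]

end

theorem bubble_interaction_estimate_general (n : ℕ)
    (ε₁ ε₂ d : ℝ) (hε₁ : 0 < ε₁) (hε₂ : 0 < ε₂) (hd : 0 ≤ d) :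
    ε₁ ^ n * ε₂ ^ n * (ε₂ ^ 4 + d ^ 4) ^ (-(((n : ℝ) + 1) / 2)) *
        (∫ r in Ioc (0 : ℝ) ((ε₂ + d) / 2),
          r ^ (2 * n + 1) * (ε₁ ^ 4 + r ^ 4) ^ (-((n : ℝ) / 2)))
      + ε₁ ^ n * ε₂ ^ (n + 2) * (ε₂ ^ 4 + d ^ 4) ^ (-((n : ℝ) / 2)) *
          (∫ r in Ioi (0 : ℝ),
            r ^ (2 * n + 1) * (ε₂ ^ 4 + r ^ 4) ^ (-(((n : ℝ) + 2) / 2)))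
      ≤ 2 * (ε₁ ^ 2 * ε₂ ^ 2 / (ε₂ ^ 4 + d ^ 4)) ^ ((n : ℝ) / 2) := by
  set A := ε₂ ^ 4 + d ^ 4
  have hA : 0 < A := by positivity
  have hrhs : (ε₁ ^ 2 * ε₂ ^ 2 / A) ^ ((n : ℝ) / 2) = ε₁ ^ n * ε₂ ^ n * A ^ (-((n : ℝ) / 2)) := by
    rw [Real.div_rpow (by positivity) hA.le, Real.mul_rpow (by positivity) (by positivity),
      sq_rpow_natCast_div_two hε₁.le, sq_rpow_natCast_div_two hε₂.le, Real.rpow_neg hA.le,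
      div_eq_mul_inv]
  have hfirst := (setIntegral_Ioc_pow_mul_rpow_neg_le n (by positivity : 0 ≤ ε₁ ^ 4)
    (by positivity : 0 ≤ (ε₂ + d) / 2)).trans (add_div_two_sq_div_two_le_sqrt ε₂ d)
  have hsecond := setIntegral_Ioi_pow_mul_rpow_neg_add_two_le n hε₂.ne'
  rw [Real.sqrt_eq_rpow] at hfirst
  have hA_pow : A ^ (-(((n : ℝ) + 1) / 2)) * A ^ ((1 : ℝ) / 2) = A ^ (-((n : ℝ) / 2)) := by
    rw [← Real.rpow_add hA]
    congr 1
    ring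
  have hε₂_pow : ε₂ ^ (n + 2) * (ε₂ ^ 2)⁻¹ = ε₂ ^ n := by
    field_simp
    ring
  rw [hrhs, two_mul (ε₁ ^ n * ε₂ ^ n * A ^ (-((n : ℝ) / 2)))]
  refine add_le_add ?_ ?_
  · calc _ ≤ ε₁ ^ n * ε₂ ^ n * A ^ (-(((n : ℝ) + 1) / 2)) * A ^ ((1 : ℝ) / 2) := by gcongr
      _ = _ := by rw [mul_assoc, hA_pow]
  · calc _ ≤ ε₁ ^ n * ε₂ ^ (n + 2) * A ^ (-((n : ℝ) / 2)) * (ε₂ ^ 2)⁻¹ := by gcongr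
      _ = _ := by rw [mul_right_comm, mul_assoc (ε₁ ^ n), hε₂_pow]

/-- Radial form of the bubble–bubble interaction estimate between bubbles with
scales `ε₁, ε₂` and centers at distance `d`. -/
theorem bubble_interaction_estimate (n : ℕ) (hn : 1 ≤ n)
    (ε₁ ε₂ d : ℝ) (hε₁ : 0 < ε₁) (hε₂ : 0 < ε₂) (hd : 0 ≤ d) :
    ε₁ ^ n * ε₂ ^ n * (ε₂ ^ 4 + d ^ 4) ^ (-(((n : ℝ) + 1) / 2)) *
        (∫ r in Ioc (0 : ℝ) ((ε₂ + d) / 2),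
          r ^ (2 * n + 1) * (ε₁ ^ 4 + r ^ 4) ^ (-((n : ℝ) / 2)))
      + ε₁ ^ n * ε₂ ^ (n + 2) * (ε₂ ^ 4 + d ^ 4) ^ (-((n : ℝ) / 2)) *
          (∫ r in Ioi (0 : ℝ),
            r ^ (2 * n + 1) * (ε₂ ^ 4 + r ^ 4) ^ (-(((n : ℝ) + 2) / 2)))
      ≤ 2 * (ε₁ ^ 2 * ε₂ ^ 2 / (ε₂ ^ 4 + d ^ 4)) ^ ((n : ℝ) / 2) :=
  bubble_interaction_estimate_general n ε₁ ε₂ d hε₁ hε₂ hd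
end
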